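/- For ω = 5π/4, the function f(λ) = sin(λω) + λ·sin(ω) has a root in the interval (0.67, 0.68). -/

import Mathlib

open Real

theorem stmt_3 :
    ∃ lam : ℝ, lam ∈ Set.Ioo (0.67 : ℝ) 0.68 ∧
      Real.sin (lam * (5 * π / 4)) + lam * Real.sin (5 * π / 4) = 0 := by
  have hs2 : Real.sqrt 2 ^ 2 = 2 := Real.sq_sqrt (by norm_num)
  have hs0 : (0:ℝ) ≤ Real.sqrt 2 := Real.sqrt_nonneg 2
  have hsu : Real.sqrt 2 < 1.415 := by nlinarith
  have hsl : (1.414:ℝ) < Real.sqrt 2 := by nlinarith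
  have hπl := Real.pi_gt_d6
  have hπu := Real.pi_lt_d6
  have hsin54 : Real.sin (5 * π / 4) = -(Real.sqrt 2 / 2) := by
    rw [show 5 * π / 4 = π / 4 + π by ring, Real.sin_add_pi, Real.sin_pi_div_four]
  have ha : Real.sin ((0.67:ℝ) * (5 * π / 4)) + 0.67 * Real.sin (5 * π / 4) > 0 := by
    rw [hsin54, show (0.67:ℝ) * (5 * π / 4) = π - 0.1625 * π by ring, Real.sin_pi_sub]
    have h1 : (0:ℝ) < 0.1625 * π := by positivity
    have h2 : (0.1625:ℝ) * π ≤ 1 := by nlinarith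
    have h3 := Real.sin_gt_sub_cube h1
    nlinarith [sq_nonneg (π - 3.141593), sq_nonneg π, mul_pos h1 h1]
  have hb : Real.sin ((0.68:ℝ) * (5 * π / 4)) + 0.68 * Real.sin (5 * π / 4) < 0 := by
    rw [hsin54, show (0.68:ℝ) * (5 * π / 4) = π - 0.15 * π by ring, Real.sin_pi_sub]
    have h1 : (0:ℝ) < 0.15 * π := by positivity
    have h3 := Real.sin_lt h1
    nlinarith
  set f : ℝ → ℝ := fun l => Real.sin (l * (5 * π / 4)) + l * Real.sin (5 * π / 4) with hf
  have hc : ContinuousOn f (Set.Icc 0.67 0.68) := by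
    apply Continuous.continuousOn
    fun_prop
  have hsub := intermediate_value_Ioo' (by norm_num : (0.67:ℝ) ≤ 0.68) hc
  have h0 : (0:ℝ) ∈ Set.Ioo (f 0.68) (f 0.67) := ⟨hb, ha⟩
  obtain ⟨lam, hmem, hval⟩ := hsub h0
  exact ⟨lam, hmem, hval⟩
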